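/- arXiv:math/0505219 — 7 statements merged into one kernel-verified Lean document; each statement's English description precedes it below -/
import Mathlib

section
/- Let k be a commutative ring and H a Hopf algebra over k. Then the k-submodule N = span_k{ x ▷ y − ε(x)·y : x, y ∈ H } of H coincides with the k-submodule span_k{ x·y − y·S²(x) : x, y ∈ H }. -/
open scoped TensorProduct
open TensorProduct

variable (k : Type*) [CommRing k] (H : Type*) [Ring H] [HopfAlgebra k H]

/-- The antipode `S`. -/
noncomputable def aS : H →ₗ[k] H := HopfAlgebra.antipode (R := k)

/-- Multiplication of `H` as a linear map on the tensor square. -/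
noncomputable def mulH : H ⊗[k] H →ₗ[k] H := LinearMap.mul' k H

/-- The left adjoint action as a linear map `H ⊗ H → H`, `x ⊗ y ↦ Σ x₍₁₎ * y * S (x₍₂₎)`. -/
noncomputable def adT : H ⊗[k] H →ₗ[k] H :=
  mulH k H ∘ₗ
  LinearMap.lTensor H
    (mulH k H ∘ₗ (TensorProduct.comm k H H).toLinearMap ∘ₗ LinearMap.rTensor H (aS k H)) ∘ₗ
  (TensorProduct.assoc k H H H).toLinearMap ∘ₗ
  LinearMap.rTensor H (Coalgebra.comul (R := k))

/-- The left adjoint action of a fixed element `x`, as a linear map `y ↦ x ▷ y`. -/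
noncomputable def adL (x : H) : H →ₗ[k] H := adT k H ∘ₗ TensorProduct.mk k H H x

/-- The left adjoint action `x ▷ y = Σ x₍₁₎ y S(x₍₂₎)`. -/
noncomputable def ad (x y : H) : H := adL k H x y

variable {R A : Type*} [CommSemiring R] [AddCommMonoid A] [Module R A] [Coalgebra R A] in
lemma Coalgebra.sum_counit_right_smul_left {ι : Type*} {a : A} (r : Coalgebra.Repr R a ι) :
    ∑ i ∈ r.index, Coalgebra.counit (R := R) (r.right i) • r.left i = a := by
  simpa only [map_sum, _root_.TensorProduct.rid_tmul, one_smul]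
    using congrArg (_root_.TensorProduct.rid R A) (Coalgebra.sum_tmul_counit_eq r)

open Coalgebra HopfAlgebra

variable {k H}

lemma ad_eq_sum {x : H} {ι : Type*} (r : Repr k x ι) (y : H) :
    ad k H x y = ∑ i ∈ r.index, r.left i * y * antipode k (r.right i) := by
  simp only [ad, adL, adT, mulH, aS, LinearMap.comp_apply, mk_apply, LinearMap.rTensor_tmul,
    ← r.eq, sum_tmul, map_sum, assoc_tmul, LinearMap.lTensor_tmul, comm_tmul,
    LinearMap.mul'_apply, LinearEquiv.coe_coe, mul_assoc]

-- `Σ y S(x₂) S²(x₁) = y S(Σ S(x₁) x₂) = ε(x) y`.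
lemma ad_sub_counit_smul_eq_sum {x : H} {ι : Type*} (r : Repr k x ι) (y : H) :
    ad k H x y - counit (R := k) x • y =
      ∑ i ∈ r.index, (r.left i * (y * antipode k (r.right i)) -
        y * antipode k (r.right i) * antipode k (antipode k (r.left i))) := by
  have hcounit : ∑ i ∈ r.index, y * antipode k (r.right i) * antipode k (antipode k (r.left i)) =
      counit (R := k) x • y := by
    simp only [mul_assoc, ← antipode_mul_antidistrib, ← Finset.mul_sum, ← map_sum,
      sum_antipode_mul_eq_smul r, map_smul, antipode_one, mul_smul_comm, mul_one]
  rw [Finset.sum_sub_distrib, hcounit, ad_eq_sum r]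
  simp only [mul_assoc]

-- Coassociativity turns `Σ x₁₁ y S(x₁₂ S(x₂))` into `Σ x₁ y S(x₂₁ S(x₂₂)) = Σ ε(x₂) x₁ y`.
lemma sum_ad_mul_antipode_sq {x : H} {ι : Type*} (r : Repr k x ι) (y : H) :
    ∑ i ∈ r.index, ad k H (r.left i) (y * antipode k (antipode k (r.right i))) = x * y := by
  let r₁ : ∀ i, Repr k (r.left i) (H × H) := fun i => ℛ k _
  let r₂ : ∀ i, Repr k (r.right i) (H × H) := fun i => ℛ k _
  let φ : H ⊗[k] (H ⊗[k] H) →ₗ[k] H := LinearMap.mul' k H ∘ₗ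
    map (LinearMap.mulRight k y)
      (antipode k ∘ₗ LinearMap.mul' k H ∘ₗ LinearMap.lTensor H (antipode k))
  have hφ (u v w : H) : φ (u ⊗ₜ (v ⊗ₜ w)) = u * y * antipode k (v * antipode k w) := by
    simp [φ]
  have hcoassoc := congr(φ $(sum_tmul_tmul_eq r r₁ r₂))
  simp only [map_sum, hφ] at hcoassoc
  calc ∑ i ∈ r.index, ad k H (r.left i) (y * antipode k (antipode k (r.right i)))
      = ∑ i ∈ r.index, ∑ j ∈ (r₁ i).index,
          (r₁ i).left j * y * antipode k ((r₁ i).right j * antipode k (r.right i)) := by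
        simp only [ad_eq_sum (r₁ _), antipode_mul_antidistrib, mul_assoc]
    _ = ∑ i ∈ r.index, ∑ j ∈ (r₂ i).index,
          r.left i * y * antipode k ((r₂ i).left j * antipode k ((r₂ i).right j)) := hcoassoc
    _ = ∑ i ∈ r.index, counit (R := k) (r.right i) • r.left i * y := by
        simp only [← Finset.mul_sum, ← map_sum, sum_mul_antipode_eq_smul, map_smul, antipode_one,
          mul_smul_comm, mul_one, smul_mul_assoc]
    _ = x * y := by rw [← Finset.sum_mul, sum_counit_right_smul_left]

lemma mul_sub_mul_antipode_sq_eq_sum {x : H} {ι : Type*} (r : Repr k x ι) (y : H) :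
    x * y - y * antipode k (antipode k x) =
      ∑ i ∈ r.index, (ad k H (r.left i) (y * antipode k (antipode k (r.right i))) -
        counit (R := k) (r.left i) • (y * antipode k (antipode k (r.right i)))) := by
  rw [Finset.sum_sub_distrib, sum_ad_mul_antipode_sq r y]
  congr 1
  conv_lhs => rw [← sum_counit_smul r]
  simp only [map_sum, map_smul, Finset.mul_sum, mul_smul_comm]

variable (k H)

/-- The submodule `N` spanned by `x ▷ y − ε(x)·y` coincides with the span of the
elements `x·y − y·S²(x)`. -/
theorem span_ad_counit_eq_span_mul_antipode_sq :
    Submodule.span k {z : H | ∃ x y : H, z = ad k H x y - Coalgebra.counit (R := k) x • y} =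
      Submodule.span k {z : H | ∃ x y : H, z = x * y - y * aS k H (aS k H x)} := by
  apply le_antisymm <;> rw [Submodule.span_le] <;> rintro z ⟨x, y, rfl⟩ <;> let r := ℛ k x
  · rw [SetLike.mem_coe, ad_sub_counit_smul_eq_sum r]
    exact Submodule.sum_mem _ fun i _ =>
      Submodule.subset_span ⟨r.left i, y * antipode k (r.right i), rfl⟩
  · rw [SetLike.mem_coe, aS, mul_sub_mul_antipode_sq_eq_sum r]
    exact Submodule.sum_mem _ fun i _ =>
      Submodule.subset_span ⟨r.left i, y * antipode k (antipode k (r.right i)), rfl⟩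
end

section
/- Suppose f : H → k is a k-linear map which is a homomorphism of left H-modules from H with the adjoint action to k with the trivial action, i.e. f(x ▷ y) = ε(x) f(y) for all x, y ∈ H. Then (id_H ⊗ f) ∘ Δ = (id_H ⊗ f) ∘ Δ̲ = (f ⊗ id_H) ∘ Δ̲ as k-linear maps H → H (identifying H ⊗ k and k ⊗ H with H); elementwise, for every x ∈ H the element Σ x₍₁₎ f(x₍₂₎) equals both Σᵢ Σ x₍₁₎ S(βᵢ) f(αᵢ ▷ x₍₂₎) and Σᵢ Σ f(x₍₁₎ S(βᵢ)) (αᵢ ▷ x₍₂₎). -/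
open scoped TensorProduct
open TensorProduct

variable (k : Type*) [CommRing k] (H : Type*) [Ring H] [HopfAlgebra k H]

variable {ι : Type*} [Fintype ι]

/-- The braiding of `Mod H` on `H ⊗ H`: `ψ(x ⊗ y) = Σᵢ (βᵢ ▷ y) ⊗ (αᵢ ▷ x)`. -/
noncomputable def psiL (α β : ι → H) : H ⊗[k] H →ₗ[k] H ⊗[k] H :=
  ∑ i, (TensorProduct.map (adL k H (β i)) (adL k H (α i))) ∘ₗ
        (TensorProduct.comm k H H).toLinearMap

/-- The transmuted comultiplication `Δ̲(x) = Σᵢ Σ x₍₁₎ S(βᵢ) ⊗ (αᵢ ▷ x₍₂₎)`. -/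
noncomputable def DeltaB (α β : ι → H) : H →ₗ[k] H ⊗[k] H :=
  ∑ i, (TensorProduct.map (LinearMap.mulRight k (aS k H (β i))) (adL k H (α i))) ∘ₗ
        (Coalgebra.comul (R := k))

/-- The transmuted antipode `S̲(x) = Σᵢ βᵢ S(αᵢ ▷ x)`. -/
noncomputable def SB (α β : ι → H) : H →ₗ[k] H :=
  ∑ i, LinearMap.mulLeft k (β i) ∘ₗ aS k H ∘ₗ adL k H (α i)

/-!
An ad-invariant functional is a twisted trace, `f (a * c) = f (c * S (S a))`, and the R-matrix
satisfies `(ε ⊗ id) R = 1`, `(S ⊗ id) R = R⁻¹` and `(S ⊗ S) R = R`. The first equality is then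
immediate: `f (αᵢ ▷ x₂) = ε(αᵢ) f(x₂)` and `Σ ε(αᵢ) βᵢ = 1`. For the second, expand `αᵢ ▷ x₂`
with `(Δ ⊗ id) R = R₁₃ R₂₃`, use `(S ⊗ S) R = R` and the trace property to bring one copy of `R`
to the left of `x₁`, commute it past `Δx` by quasitriangularity (in the form
`τ(R⁻¹) Δx = Δᵒᵖx τ(R⁻¹)`); the remaining `R⁻¹ R` collapses to `1`, leaving `Σ x₁ f(x₂)`.
-/

open Coalgebra

lemma Coalgebra.sum_counit_right_smul {R A ι : Type*} [CommSemiring R] [AddCommMonoid A]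
    [Module R A] [Coalgebra R A] {a : A} (ρ : Coalgebra.Repr R a ι) :
    ∑ i ∈ ρ.index, counit (R := R) (ρ.right i) • ρ.left i = a := by
  simpa only [map_sum, TensorProduct.rid_tmul, one_smul] using
    congr(TensorProduct.rid R R A $(sum_tmul_counit_eq ρ))

section AdjointAction

variable {k H}

lemma aS_one : aS k H 1 = 1 := HopfAlgebra.antipode_one

lemma aS_mul (a b : H) : aS k H (a * b) = aS k H b * aS k H a :=
  HopfAlgebra.antipode_mul_antidistrib a b

lemma ad_eq_mul'_map (a y : H) :
    ad k H a y = LinearMap.mul' k H (map (LinearMap.mulRight k y) (aS k H) (comul a)) := by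
  simp only [ad, adL, adT, mulH, LinearMap.comp_apply, TensorProduct.mk_apply,
    LinearMap.rTensor_tmul, LinearEquiv.coe_coe]
  induction comul (R := k) a using TensorProduct.induction_on with
  | zero => simp
  | tmul u v => simp [mul_assoc]
  | add s t hs ht => simp only [add_tmul, map_add, hs, ht]

lemma ad_eq_sum_s1 {κ : Type*} {a : H} (ρ : Coalgebra.Repr k a κ) (y : H) :
    ad k H a y = ∑ p ∈ ρ.index, ρ.left p * y * aS k H (ρ.right p) := by
  simp [ad_eq_mul'_map, ← ρ.eq, map_sum]

lemma sum_ad_mul_antipode_antipode (a c : H) :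
    ∑ p ∈ (ℛ k a).index, ad k H ((ℛ k a).left p) (c * aS k H (aS k H ((ℛ k a).right p))) =
      a * c := by
  set ρ := ℛ k a
  have hcoassoc := congr(LinearMap.mul' k H (map (LinearMap.mulRight k c)
      (LinearMap.mul' k H ∘ₗ (TensorProduct.comm k H H).toLinearMap ∘ₗ
        map (aS k H) (aS k H ∘ₗ aS k H)) $(sum_tmul_tmul_eq ρ (fun p => ℛ k (ρ.left p))
          (fun p => ℛ k (ρ.right p)))))
  simp only [map_sum, map_tmul, LinearMap.mul'_apply, LinearMap.comp_apply,
    LinearEquiv.coe_coe, TensorProduct.comm_tmul, LinearMap.mulRight_apply] at hcoassoc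
  calc _ = ∑ p ∈ ρ.index, ∑ q ∈ (ℛ k (ρ.left p)).index,
        (ℛ k (ρ.left p)).left q * c *
          (aS k H (aS k H (ρ.right p)) * aS k H ((ℛ k (ρ.left p)).right q)) := by
        simp only [ad_eq_sum_s1 (ℛ k _), mul_assoc]
    _ = ∑ p ∈ ρ.index, ρ.left p * c * aS k H (∑ q ∈ (ℛ k (ρ.right p)).index,
          (ℛ k (ρ.right p)).left q * aS k H ((ℛ k (ρ.right p)).right q)) := by
        rw [hcoassoc]
        simp only [map_sum, aS_mul, Finset.mul_sum]
    _ = a * c := by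
        simp only [aS, HopfAlgebra.sum_mul_antipode_eq_smul, map_smul, HopfAlgebra.antipode_one,
          mul_smul_comm, mul_one, ← smul_mul_assoc, ← Finset.sum_mul, sum_counit_right_smul]

def IsAdInvariant (f : H →ₗ[k] k) : Prop :=
  ∀ x y : H, f (ad k H x y) = counit x * f y

lemma IsAdInvariant.apply_mul_antipode_antipode {f : H →ₗ[k] k} (hf : IsAdInvariant f)
    (a c : H) : f (c * aS k H (aS k H a)) = f (a * c) := by
  rw [← sum_ad_mul_antipode_antipode (k := k) a c, map_sum]
  conv_lhs => rw [← sum_counit_smul (ℛ k a)]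
  simp only [map_sum, map_smul, Finset.mul_sum, mul_smul_comm, smul_eq_mul, hf _ _]

end AdjointAction

section RMatrix

variable {k H} {α β : ι → H}

lemma sum_counit_smul_eq_one_of_sum_comul_tmul {R' : H ⊗[k] H}
    (hinv : (∑ i, α i ⊗ₜ[k] β i) * R' = 1)
    (hΔ : ∑ i, comul (α i) ⊗ₜ[k] β i = ∑ i, ∑ j, (α i ⊗ₜ[k] α j) ⊗ₜ[k] (β i * β j)) :
    ∑ i, counit (R := k) (α i) • β i = 1 := by
  have h := congr(map ((TensorProduct.lid k H).toLinearMap ∘ₗ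
    (counit (R := k) (A := H)).rTensor H) (LinearMap.id : H →ₗ[k] H) $hΔ)
  simp only [map_sum, map_tmul, LinearMap.comp_apply, rTensor_counit_comul, LinearEquiv.coe_coe,
    TensorProduct.lid_tmul, one_smul, LinearMap.rTensor_tmul, LinearMap.id_apply] at h
  have hR : (1 ⊗ₜ[k] ∑ i, counit (R := k) (α i) • β i) * ∑ i, α i ⊗ₜ[k] β i =
      ∑ i, α i ⊗ₜ[k] β i := by
    rw [TensorProduct.tmul_sum, Finset.sum_mul_sum, h]
    simp only [Algebra.TensorProduct.tmul_mul_tmul, one_mul, smul_mul_assoc,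
      TensorProduct.smul_tmul]
  have h1 : (1 : H) ⊗ₜ[k] ∑ i, counit (R := k) (α i) • β i = 1 := by
    rw [← mul_one (_ ⊗ₜ _), ← hinv, ← mul_assoc, hR, hinv]
  simpa [Algebra.TensorProduct.one_def] using congr(LinearMap.mul' k H $h1)

lemma sum_counit_smul_eq_one_of_sum_tmul_comul {R' : H ⊗[k] H}
    (hinv : (∑ i, α i ⊗ₜ[k] β i) * R' = 1)
    (hΔ : ∑ i, α i ⊗ₜ[k] comul (β i) = ∑ i, ∑ j, (α i * α j) ⊗ₜ[k] (β j ⊗ₜ[k] β i)) :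
    ∑ i, counit (R := k) (β i) • α i = 1 := by
  have h := congr(map (LinearMap.id : H →ₗ[k] H) ((TensorProduct.rid k H).toLinearMap ∘ₗ
    (counit (R := k) (A := H)).lTensor H) $hΔ)
  simp only [map_sum, map_tmul, LinearMap.comp_apply, lTensor_counit_comul, LinearEquiv.coe_coe,
    TensorProduct.rid_tmul, one_smul, LinearMap.lTensor_tmul, LinearMap.id_apply] at h
  have hR : ((∑ i, counit (R := k) (β i) • α i) ⊗ₜ[k] 1) * ∑ i, α i ⊗ₜ[k] β i =
      ∑ i, α i ⊗ₜ[k] β i := by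
    rw [TensorProduct.sum_tmul, Finset.sum_mul_sum, h]
    simp only [Algebra.TensorProduct.tmul_mul_tmul, one_mul, smul_mul_assoc,
      TensorProduct.smul_tmul]
  have h1 : (∑ i, counit (R := k) (β i) • α i) ⊗ₜ[k] (1 : H) = 1 := by
    rw [← mul_one (_ ⊗ₜ _), ← hinv, ← mul_assoc, hR, hinv]
  simpa [Algebra.TensorProduct.one_def] using congr(LinearMap.mul' k H $h1)

lemma sum_antipode_tmul_mul_eq_one (h1 : ∑ i, counit (R := k) (α i) • β i = 1)
    (hΔ : ∑ i, comul (α i) ⊗ₜ[k] β i = ∑ i, ∑ j, (α i ⊗ₜ[k] α j) ⊗ₜ[k] (β i * β j)) :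
    (∑ i, aS k H (α i) ⊗ₜ[k] β i) * ∑ i, α i ⊗ₜ[k] β i = 1 := by
  have h := congr(map (LinearMap.mul' k H ∘ₗ (aS k H).rTensor H) (LinearMap.id : H →ₗ[k] H) $hΔ)
  simp only [aS, map_sum, map_tmul, LinearMap.comp_apply,
    HopfAlgebra.mul_antipode_rTensor_comul_apply, LinearMap.rTensor_tmul, LinearMap.mul'_apply,
    LinearMap.id_apply, Algebra.algebraMap_eq_smul_one,
    TensorProduct.smul_tmul, ← TensorProduct.tmul_sum, h1] at h
  rw [Finset.sum_mul_sum, Algebra.TensorProduct.one_def, h]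
  simp only [aS, Algebra.TensorProduct.tmul_mul_tmul]

lemma sum_antipode_tmul_antipode_eq (h1 : ∑ i, counit (R := k) (β i) • α i = 1)
    (hΔ : ∑ i, α i ⊗ₜ[k] comul (β i) = ∑ i, ∑ j, (α i * α j) ⊗ₜ[k] (β j ⊗ₜ[k] β i))
    (hinv : (∑ i, α i ⊗ₜ[k] β i) * ∑ i, aS k H (α i) ⊗ₜ[k] β i = 1) :
    ∑ i, aS k H (α i) ⊗ₜ[k] aS k H (β i) = ∑ i, α i ⊗ₜ[k] β i := by
  have h := congr(map (aS k H) (LinearMap.mul' k H ∘ₗ (aS k H).lTensor H) $hΔ)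
  simp only [map_sum, map_tmul, LinearMap.comp_apply, LinearMap.lTensor_tmul,
    LinearMap.mul'_apply, aS_mul] at h
  simp only [aS, HopfAlgebra.mul_antipode_lTensor_comul_apply, Algebra.algebraMap_eq_smul_one,
    ← TensorProduct.smul_tmul, ← map_smul, ← TensorProduct.sum_tmul, ← map_sum, h1,
    HopfAlgebra.antipode_one] at h
  have hX : (∑ i, aS k H (α i) ⊗ₜ[k] β i) * ∑ i, aS k H (α i) ⊗ₜ[k] aS k H (β i) = 1 := by
    rw [Finset.sum_mul_sum, Finset.sum_comm, Algebra.TensorProduct.one_def, h]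
    simp only [aS, Algebra.TensorProduct.tmul_mul_tmul]
  rw [← one_mul (∑ i, aS k H (α i) ⊗ₜ[k] aS k H (β i)), ← hinv, mul_assoc, hX, mul_one]

lemma comm_mul_eq_mul_comm_of_conj_eq_comm {R R' y : H ⊗[k] H} (hinv : R' * R = 1)
    (h : R * y * R' = TensorProduct.comm k H H y) :
    TensorProduct.comm k H H R' * y = TensorProduct.comm k H H y * TensorProduct.comm k H H R' := by
  have hy : y * R' = R' * TensorProduct.comm k H H y := by
    rw [← h, ← one_mul (y * R'), ← hinv]
    simp only [mul_assoc]
  have hcomm := congr(Algebra.TensorProduct.comm k H H $hy)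
  simp only [map_mul] at hcomm
  exact (TensorProduct.comm_comm k H H y ▸ hcomm).symm

end RMatrix

section Transmutation

variable {k H} {α β : ι → H} {f : H →ₗ[k] k}

lemma DeltaB_eq_sum {κ : Type*} {x : H} (ρ : Coalgebra.Repr k x κ) :
    DeltaB k H α β x =
      ∑ i, ∑ p ∈ ρ.index, (ρ.left p * aS k H (β i)) ⊗ₜ[k] ad k H (α i) (ρ.right p) := by
  simp only [DeltaB, LinearMap.sum_apply, LinearMap.comp_apply, ← ρ.eq, map_sum, map_tmul,
    LinearMap.mulRight_apply]
  rfl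

lemma rid_lTensor_DeltaB (hf : IsAdInvariant f) (h1 : ∑ i, counit (R := k) (α i) • β i = 1)
    (x : H) :
    TensorProduct.rid k H (f.lTensor H (DeltaB k H α β x)) =
      TensorProduct.rid k H (f.lTensor H (comul x)) := by
  rw [DeltaB_eq_sum (ℛ k x), ← (ℛ k x).eq, Finset.sum_comm]
  simp only [map_sum, LinearMap.lTensor_tmul, TensorProduct.rid_tmul, hf _ _]
  refine Finset.sum_congr rfl fun p _ => ?_
  calc _ = f ((ℛ k x).right p) •
        ((ℛ k x).left p * aS k H (∑ i, counit (R := k) (α i) • β i)) := by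
        simp only [map_sum, map_smul, Finset.mul_sum, mul_smul_comm, Finset.smul_sum, smul_smul,
          mul_comm]
    _ = _ := by rw [h1, aS_one, mul_one]

lemma IsAdInvariant.sum_apply_mul_antipode_smul (hf : IsAdInvariant f)
    (hS : ∑ i, aS k H (α i) ⊗ₜ[k] aS k H (β i) = ∑ i, α i ⊗ₜ[k] β i) (c : H) :
    ∑ i, f (c * aS k H (β i)) • α i = ∑ i, f (β i * c) • aS k H (α i) := by
  have h := congr(TensorProduct.rid k H
    (map (LinearMap.id : H →ₗ[k] H) (f ∘ₗ LinearMap.mulLeft k c ∘ₗ aS k H) $hS))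
  simp only [map_sum, map_tmul, TensorProduct.rid_tmul, LinearMap.comp_apply,
    LinearMap.mulLeft_apply, LinearMap.id_apply, hf.apply_mul_antipode_antipode] at h
  exact h.symm

lemma IsAdInvariant.sum_apply_mul_antipode_smul_ad (hf : IsAdInvariant f)
    (hΔ : ∑ i, comul (α i) ⊗ₜ[k] β i = ∑ i, ∑ j, (α i ⊗ₜ[k] α j) ⊗ₜ[k] (β i * β j))
    (hS : ∑ i, aS k H (α i) ⊗ₜ[k] aS k H (β i) = ∑ i, α i ⊗ₜ[k] β i) (l r : H) :
    ∑ i, f (l * aS k H (β i)) • ad k H (α i) r =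
      ∑ j, ∑ i, f (β i * (l * aS k H (β j))) • (aS k H (α i) * (r * aS k H (α j))) := by
  have h := congr(TensorProduct.rid k H (map (LinearMap.mul' k H ∘ₗ
    map (LinearMap.mulRight k r) (aS k H)) (f ∘ₗ LinearMap.mulLeft k l ∘ₗ aS k H) $hΔ))
  simp only [map_sum, map_tmul, TensorProduct.rid_tmul, LinearMap.comp_apply,
    LinearMap.mulLeft_apply, LinearMap.mulRight_apply, LinearMap.mul'_apply, ← ad_eq_mul'_map,
    aS_mul] at h
  rw [h, Finset.sum_comm]
  refine Finset.sum_congr rfl fun j _ => ?_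
  calc _ = (∑ i, f (l * aS k H (β j) * aS k H (β i)) • α i) * (r * aS k H (α j)) := by
        simp only [Finset.sum_mul, smul_mul_assoc, mul_assoc]
    _ = (∑ i, f (β i * (l * aS k H (β j))) • aS k H (α i)) * (r * aS k H (α j)) := by
        rw [hf.sum_apply_mul_antipode_smul hS]
    _ = _ := by simp only [Finset.sum_mul, smul_mul_assoc]

lemma IsAdInvariant.lid_rTensor_DeltaB (hf : IsAdInvariant f)
    (hΔ : ∑ i, comul (α i) ⊗ₜ[k] β i = ∑ i, ∑ j, (α i ⊗ₜ[k] α j) ⊗ₜ[k] (β i * β j))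
    (hS : ∑ i, aS k H (α i) ⊗ₜ[k] aS k H (β i) = ∑ i, α i ⊗ₜ[k] β i)
    (hinv : (∑ i, aS k H (α i) ⊗ₜ[k] β i) * ∑ i, α i ⊗ₜ[k] β i = 1) {x : H}
    (hx : (∑ i, β i ⊗ₜ[k] aS k H (α i)) * comul x =
      TensorProduct.comm k H H (comul x) * ∑ i, β i ⊗ₜ[k] aS k H (α i)) :
    TensorProduct.lid k H (f.rTensor H (DeltaB k H α β x)) =
      TensorProduct.rid k H (f.lTensor H (comul x)) := by
  set ρ := ℛ k x
  have hx' : ∑ i, ∑ p ∈ ρ.index, (β i * ρ.left p) ⊗ₜ[k] (aS k H (α i) * ρ.right p) =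
      ∑ p ∈ ρ.index, ∑ i, (ρ.right p * β i) ⊗ₜ[k] (ρ.left p * aS k H (α i)) := by
    rw [← ρ.eq, map_sum, Finset.sum_mul_sum, Finset.sum_mul_sum] at hx
    simpa only [TensorProduct.comm_tmul, Algebra.TensorProduct.tmul_mul_tmul] using hx
  have hinv' : ∑ i, ∑ j, (aS k H (α i) * aS k H (α j)) ⊗ₜ[k] (β i * aS k H (β j)) = 1 ⊗ₜ 1 := by
    rw [← Algebra.TensorProduct.one_def, ← hinv, ← hS, Finset.sum_mul_sum]
    simp only [Algebra.TensorProduct.tmul_mul_tmul]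
  calc _ = ∑ p ∈ ρ.index, ∑ i, f (ρ.left p * aS k H (β i)) • ad k H (α i) (ρ.right p) := by
        rw [DeltaB_eq_sum ρ, Finset.sum_comm]
        simp only [map_sum, LinearMap.rTensor_tmul, TensorProduct.lid_tmul]
    _ = ∑ j, ∑ i, ∑ p ∈ ρ.index,
        f (β i * ρ.left p * aS k H (β j)) • (aS k H (α i) * ρ.right p * aS k H (α j)) := by
        simp only [hf.sum_apply_mul_antipode_smul_ad hΔ hS, mul_assoc]
        rw [Finset.sum_comm]
        exact Finset.sum_congr rfl fun j _ => Finset.sum_comm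
    _ = ∑ j, ∑ p ∈ ρ.index, ∑ i,
        f (ρ.right p * β i * aS k H (β j)) • (ρ.left p * aS k H (α i) * aS k H (α j)) := by
        refine Finset.sum_congr rfl fun j _ => ?_
        have h := congr(TensorProduct.lid k H (map (f ∘ₗ LinearMap.mulRight k (aS k H (β j)))
          (LinearMap.mulRight k (aS k H (α j))) $hx'))
        simpa only [map_sum, map_tmul, TensorProduct.lid_tmul, LinearMap.comp_apply,
          LinearMap.mulRight_apply] using h
    _ = ∑ p ∈ ρ.index, f (ρ.right p) • ρ.left p := by
        rw [Finset.sum_comm]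
        refine Finset.sum_congr rfl fun p _ => ?_
        have h := congr(TensorProduct.rid k H
          (map (LinearMap.mulLeft k (ρ.left p)) (f ∘ₗ LinearMap.mulLeft k (ρ.right p)) $hinv'))
        rw [Finset.sum_comm]
        simpa only [map_sum, map_tmul, TensorProduct.rid_tmul, LinearMap.comp_apply,
          LinearMap.mulLeft_apply, mul_assoc, mul_one] using h
    _ = _ := by simp [← ρ.eq, map_sum]

end Transmutation

/-- If `f : H → k` is a morphism of left `H`-modules (adjoint action on `H`, trivial on `k`),
then `(id ⊗ f) ∘ Δ = (id ⊗ f) ∘ Δ̲ = (f ⊗ id) ∘ Δ̲`. -/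
theorem lTensor_comul_eq_lTensor_DeltaB_eq_rTensor_DeltaB
    (α β : ι → H) (R' : H ⊗[k] H)
    (hinv : (∑ i, α i ⊗ₜ[k] β i) * R' = 1 ∧ R' * (∑ i, α i ⊗ₜ[k] β i) = 1)
    (hqt1 : ∀ x : H, (∑ i, α i ⊗ₜ[k] β i) * Coalgebra.comul (R := k) x * R'
        = TensorProduct.comm k H H (Coalgebra.comul (R := k) x))
    (hqt2 : LinearMap.rTensor H (Coalgebra.comul (R := k)) (∑ i, α i ⊗ₜ[k] β i)
        = (∑ i, (α i ⊗ₜ[k] (1 : H)) ⊗ₜ[k] β i) * (∑ i, ((1 : H) ⊗ₜ[k] α i) ⊗ₜ[k] β i))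
    (hqt3 : LinearMap.lTensor H (Coalgebra.comul (R := k)) (∑ i, α i ⊗ₜ[k] β i)
        = (∑ i, α i ⊗ₜ[k] ((1 : H) ⊗ₜ[k] β i)) * (∑ i, α i ⊗ₜ[k] (β i ⊗ₜ[k] (1 : H))))
    (f : H →ₗ[k] k)
    (hf : ∀ x y : H, f (ad k H x y) = Coalgebra.counit (R := k) x * f y)
    (x : H) :
    TensorProduct.rid k H (LinearMap.lTensor H f (Coalgebra.comul (R := k) x))
        = TensorProduct.rid k H (LinearMap.lTensor H f (DeltaB k H α β x)) ∧
      TensorProduct.rid k H (LinearMap.lTensor H f (DeltaB k H α β x))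
        = TensorProduct.lid k H (LinearMap.rTensor H f (DeltaB k H α β x)) := by
  have hΔ : ∑ i, comul (α i) ⊗ₜ[k] β i = ∑ i, ∑ j, (α i ⊗ₜ[k] α j) ⊗ₜ[k] (β i * β j) := by
    simpa only [map_sum, LinearMap.rTensor_tmul, Finset.sum_mul_sum,
      Algebra.TensorProduct.tmul_mul_tmul, one_mul, mul_one] using hqt2
  have hΔ' : ∑ i, α i ⊗ₜ[k] comul (β i) = ∑ i, ∑ j, (α i * α j) ⊗ₜ[k] (β j ⊗ₜ[k] β i) := by
    simpa only [map_sum, LinearMap.lTensor_tmul, Finset.sum_mul_sum,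
      Algebra.TensorProduct.tmul_mul_tmul, one_mul, mul_one] using hqt3
  have h1 := sum_counit_smul_eq_one_of_sum_comul_tmul hinv.1 hΔ
  have hSR := sum_antipode_tmul_mul_eq_one h1 hΔ
  have hR' : ∑ i, aS k H (α i) ⊗ₜ[k] β i = R' := left_inv_eq_right_inv hSR hinv.1
  have hS := sum_antipode_tmul_antipode_eq (sum_counit_smul_eq_one_of_sum_tmul_comul hinv.1 hΔ')
    hΔ' (hR' ▸ hinv.1)
  have hx := comm_mul_eq_mul_comm_of_conj_eq_comm hinv.2 (hqt1 x)
  simp only [← hR', map_sum, TensorProduct.comm_tmul] at hx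
  have hrid := rid_lTensor_DeltaB hf h1 x
  exact ⟨hrid.symm, hrid.trans (IsAdInvariant.lid_rTensor_DeltaB hf hΔ hS hSR hx).symm⟩
end

section
/- Let χ : H → k be a k-linear map such that χ(x ▷ y) = ε(x) χ(y) for all x, y ∈ H and χ is a left integral on H, i.e. Σ x₍₁₎ χ(x₍₂₎) = χ(x)·1 for all x ∈ H. Then (χ ⊗ χ) ∘ (μ ⊗ id_H) ∘ (id_H ⊗ Δ̲) = χ ⊗ χ as maps H ⊗ H → k, where μ is the multiplication of H; elementwise, Σ χ(x · y⟨1⟩) χ(y⟨2⟩) = χ(x) χ(y) for all x, y ∈ H, where Δ̲(y) = Σ y⟨1⟩ ⊗ y⟨2⟩. (This is the computation used in the paper's proof that the Hennings-type invariant is unchanged by handle-slide moves.) -/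
open scoped TensorProduct
open TensorProduct

variable (k : Type*) [CommRing k] (H : Type*) [Ring H] [HopfAlgebra k H]

variable {ι : Type*} [Fintype ι]

/-! Invariance of `χ` under the adjoint action turns `χ(αᵢ ▷ y₍₂₎)` into `ε(αᵢ) χ(y₍₂₎)`, and the
integral property collapses `Σ y₍₁₎ χ(y₍₂₎)` to `χ(y)·1`, leaving `χ(x S(Σᵢ ε(αᵢ) βᵢ)) χ(y)`.
Finally `Σᵢ ε(αᵢ) βᵢ = (ε ⊗ id)(R) = 1`: applying `ε ⊗ ε ⊗ id` to `(Δ ⊗ id)(R) = R₁₃ R₂₃` shows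
that it is idempotent, and it has a right inverse because `R` does. -/

section

variable {A : Type*} [Ring A] [Bialgebra k A] (C : Type*) [Ring C] [Algebra k C]

noncomputable def counitLeft : A ⊗[k] C →ₐ[k] C :=
  (Algebra.TensorProduct.lid k C).toAlgHom.comp
    (Algebra.TensorProduct.map (Bialgebra.counitAlgHom k A) (AlgHom.id k C))

variable {C}

theorem counitLeft_tmul (a : A) (c : C) :
    counitLeft k C (a ⊗ₜ[k] c) = Coalgebra.counit (R := k) a • c := by
  simp [counitLeft]

theorem counitLeft_toLinearMap : (counitLeft k C (A := A)).toLinearMap =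
    (TensorProduct.lid k C).toLinearMap ∘ₗ LinearMap.rTensor C Coalgebra.counit := by
  ext a c
  simp [counitLeft_tmul]

theorem counitLeft_comul (a : A) : counitLeft k A (Coalgebra.comul (R := k) a) = a := by
  rw [← AlgHom.toLinearMap_apply, counitLeft_toLinearMap, LinearMap.comp_apply,
    Coalgebra.rTensor_counit_comul]
  simp

theorem counitLeft_map_counitLeft_rTensor {f : A →ₗ[k] A ⊗[k] A}
    (hf : ∀ a, Coalgebra.counit (R := k) (counitLeft k A (f a)) = Coalgebra.counit (R := k) a)
    (R : A ⊗[k] C) :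
    counitLeft k C (Algebra.TensorProduct.map (counitLeft k A) (AlgHom.id k C)
      (LinearMap.rTensor C f R)) = counitLeft k C R := by
  induction R using TensorProduct.induction_on with
  | zero => simp
  | tmul a c => simp [counitLeft_tmul, hf]
  | add R₁ R₂ h₁ h₂ => simp only [map_add, h₁, h₂]

theorem counitLeft_eq_one_of_rTensor_comul {R R' : A ⊗[k] C} (hinv : R * R' = 1)
    (hR : LinearMap.rTensor C (Coalgebra.comul (R := k)) R =
      LinearMap.rTensor C (Algebra.TensorProduct.includeLeft (S := k)).toLinearMap R *
        LinearMap.rTensor C Algebra.TensorProduct.includeRight.toLinearMap R) :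
    counitLeft k C R = 1 := by
  set b := counitLeft k C R
  have hidem : b * b = b := by
    have := congrArg ((counitLeft k C).comp
      (Algebra.TensorProduct.map (counitLeft k A) (AlgHom.id k C))) hR
    simp only [AlgHom.comp_apply, map_mul] at this
    rwa [counitLeft_map_counitLeft_rTensor, counitLeft_map_counitLeft_rTensor,
      counitLeft_map_counitLeft_rTensor, eq_comm] at this
    · intro a; simp [counitLeft_tmul]
    · intro a; simp [counitLeft_tmul]
    · intro a; rw [counitLeft_comul]
  have hright : b * counitLeft k C R' = 1 := by rw [← map_mul, hinv, map_one]
  calc b = b * (b * counitLeft k C R') := by rw [hright, mul_one]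
    _ = b * counitLeft k C R' := by rw [← mul_assoc, hidem]
    _ = 1 := hright

theorem mul'_map_comul_of_integral (f χ : A →ₗ[k] k)
    (hint : ∀ x : A, TensorProduct.rid k A (LinearMap.lTensor A χ (Coalgebra.comul (R := k) x))
      = χ x • (1 : A))
    (y : A) :
    LinearMap.mul' k k (TensorProduct.map f χ (Coalgebra.comul (R := k) y)) = f 1 * χ y := by
  have hfactor : LinearMap.mul' k k ∘ₗ TensorProduct.map f χ =
      f ∘ₗ (TensorProduct.rid k A).toLinearMap ∘ₗ LinearMap.lTensor A χ := by
    ext a b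
    simp [mul_comm]
  rw [← LinearMap.comp_apply, hfactor]
  simp [hint, mul_comm]

end

/-- For a left-integral left `H`-module morphism `χ : H → k` one has
`(χ ⊗ χ) ∘ (μ ⊗ id) ∘ (id ⊗ Δ̲) = χ ⊗ χ`: `Σ χ(x·y⟨1⟩) χ(y⟨2⟩) = χ(x) χ(y)`. -/
theorem chi_handle_slide
    (α β : ι → H) (R' : H ⊗[k] H)
    (hinv : (∑ i, α i ⊗ₜ[k] β i) * R' = 1 ∧ R' * (∑ i, α i ⊗ₜ[k] β i) = 1)
    (hqt2 : LinearMap.rTensor H (Coalgebra.comul (R := k)) (∑ i, α i ⊗ₜ[k] β i)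
        = (∑ i, (α i ⊗ₜ[k] (1 : H)) ⊗ₜ[k] β i) * (∑ i, ((1 : H) ⊗ₜ[k] α i) ⊗ₜ[k] β i))
    (χ : H →ₗ[k] k)
    (hχ : ∀ x y : H, χ (ad k H x y) = Coalgebra.counit (R := k) x * χ y)
    (hint : ∀ x : H,
       TensorProduct.rid k H (LinearMap.lTensor H χ (Coalgebra.comul (R := k) x))
         = χ x • (1 : H))
    (x y : H) :
    LinearMap.mul' k k
        (TensorProduct.map (χ ∘ₗ LinearMap.mulLeft k x) χ (DeltaB k H α β y))
      = χ x * χ y := by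
  have hcounit : ∑ i, Coalgebra.counit (R := k) (α i) • β i = 1 := by
    simpa [map_sum, counitLeft_tmul] using
      counitLeft_eq_one_of_rTensor_comul k hinv.1 (by simpa [map_sum] using hqt2)
  have hχad : ∀ u, χ ∘ₗ adL k H u = Coalgebra.counit (R := k) u • χ :=
    fun u => LinearMap.ext (hχ u)
  calc _ = ∑ i, Coalgebra.counit (R := k) (α i) * LinearMap.mul' k k (TensorProduct.map
        (χ ∘ₗ LinearMap.mulLeft k x ∘ₗ LinearMap.mulRight k (aS k H (β i))) χ
          (Coalgebra.comul (R := k) y)) := by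
        rw [DeltaB, LinearMap.sum_apply, map_sum, map_sum]
        refine Finset.sum_congr rfl fun i _ => ?_
        rw [LinearMap.comp_apply, ← LinearMap.comp_apply (TensorProduct.map _ _),
          ← TensorProduct.map_comp, hχad, TensorProduct.map_smul_right, LinearMap.smul_apply,
          map_smul, smul_eq_mul, LinearMap.comp_assoc]
    _ = ∑ i, Coalgebra.counit (R := k) (α i) * χ (x * aS k H (β i)) * χ y := by
        simp [mul'_map_comul_of_integral k _ _ hint, mul_assoc]
    _ = χ (x * aS k H (∑ i, Coalgebra.counit (R := k) (α i) • β i)) * χ y := by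
        simp only [map_sum, Finset.mul_sum, Finset.sum_mul, map_smul, mul_smul_comm, smul_eq_mul]
    _ = χ x * χ y := by rw [hcounit, aS, HopfAlgebra.antipode_one, mul_one]
end

section
/- For every x ∈ H, writing c₊ = Σⱼ c′ⱼ ⊗ c″ⱼ, one has Σⱼ Σ (x₍₁₎ ▷ c′ⱼ) ⊗ (x₍₂₎ ▷ c″ⱼ) = ε(x)·c₊, and likewise with c₋ in place of c₊. Equivalently, c₊ and c₋ are invariant under the action of H on H ⊗ H given by x · (a ⊗ b) = Σ (x₍₁₎ ▷ a) ⊗ (x₍₂₎ ▷ b), so each defines a homomorphism of left H-modules k → H ⊗ H. -/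
open scoped TensorProduct
open TensorProduct

variable (k : Type*) [CommRing k] (H : Type*) [Ring H] [HopfAlgebra k H]

variable {ι : Type*} [Fintype ι]

/-! In the convolution algebra of linear maps `H → H ⊗ H`, the diagonal adjoint action on
`w = (S ⊗ id) M` factors as `ι₁ ⋆ ((S ⊗ id) ∘ (· * M) ∘ Δ) ⋆ (ι₂ ∘ S)`, where `ι₁, ι₂` are the
two inclusions of `H` into `H ⊗ H`. If `M` commutes with `Δ(H)`, the middle factor equals
`(ι₁ ∘ S) ⋆ (w * ι₂ ·)`, and the antipode relations `ιⱼ ⋆ (ιⱼ ∘ S) = 1` collapse the product to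
`x ↦ ε(x) w`. Both `R₂₁R` and its inverse commute with `Δ(H)`, because `R Δ R⁻¹ = Δᵒᵖ`. -/

open LinearMap WithConv Coalgebra Algebra.TensorProduct

section Convolution

variable {R C A : Type*} [CommSemiring R] [AddCommMonoid C] [Module R C] [Coalgebra R C]
  [Semiring A] [Algebra R A]

lemma mulRight_comp_convMul (a : A) (f g : C →ₗ[R] A) :
    toConv (mulRight R a ∘ₗ f) * toConv g = toConv f * toConv (mulLeft R a ∘ₗ g) := by
  ext c; simp [(ℛ R c).convMul_apply, mul_assoc]

lemma mulLeft_comp_convMul (a : A) (f g : C →ₗ[R] A) :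
    toConv (mulLeft R a ∘ₗ f) * toConv g =
      toConv (mulLeft R a ∘ₗ (toConv f * toConv g).ofConv) := by
  ext c; simp [(ℛ R c).convMul_apply, mul_assoc]

end Convolution

section Antipode

variable {R A B : Type*} [CommSemiring R] [Semiring A] [HopfAlgebra R A] [Semiring B]
  [Algebra R B]

lemma algHom_convMul_algHom_comp_antipode (g : A →ₐ[R] B) :
    toConv g.toLinearMap * toConv (g.toLinearMap ∘ₗ HopfAlgebra.antipode R) = 1 := by
  ext a
  simp [(ℛ R a).convMul_apply, ← map_mul, ← map_sum,
    HopfAlgebra.sum_mul_antipode_eq_algebraMap_counit (ℛ R a)]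

end Antipode

section DiagonalAdjointAction

variable {k H}

lemma map_antipode_mul_tmul {B : Type*} [Ring B] [Algebra k B] (M : H ⊗[k] B) (a : H) (b : B) :
    TensorProduct.map (aS k H) LinearMap.id (M * (a ⊗ₜ[k] b)) =
      (aS k H a ⊗ₜ[k] 1) * TensorProduct.map (aS k H) LinearMap.id M * (1 ⊗ₜ[k] b) := by
  induction M using TensorProduct.induction_on with
  | zero => simp
  | add M N hM hN => simp only [add_mul, mul_add, map_add, hM, hN]
  | tmul c d => simp [aS, HopfAlgebra.antipode_mul_antidistrib]

variable (k) in
noncomputable def adRight (c : H) : H →ₗ[k] H := adT k H ∘ₗ (TensorProduct.mk k H H).flip c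

lemma adRight_eq_convMul (c : H) :
    toConv (adRight k c) = toConv (mulRight k c) * toConv (aS k H) := by
  ext x
  simp [adRight, adT, mulH, ← (ℛ k x).eq, (ℛ k x).convMul_apply, sum_tmul, mul_assoc]

lemma algHom_comp_adRight {B : Type*} [Semiring B] [Algebra k B] (g : H →ₐ[k] B) (c : H) :
    toConv (g.toLinearMap ∘ₗ adRight k c) =
      toConv (g.toLinearMap ∘ₗ mulRight k c) * toConv (g.toLinearMap ∘ₗ aS k H) := by
  rw [← ofConv_toConv (adRight k c), adRight_eq_convMul, algHom_comp_convMul_distrib]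

noncomputable def diagAd (w : H ⊗[k] H) : H →ₗ[k] H ⊗[k] H :=
  TensorProduct.map (adT k H) (adT k H) ∘ₗ
    (TensorProduct.tensorTensorTensorComm k H H H H).toLinearMap ∘ₗ
    (TensorProduct.mk k (H ⊗[k] H) (H ⊗[k] H)).flip w ∘ₗ comul

lemma diagAd_add (v w : H ⊗[k] H) : diagAd (v + w) = diagAd v + diagAd w := by
  ext; simp [diagAd]

local notation "ιL" => AlgHom.toLinearMap (includeLeft : H →ₐ[k] H ⊗[k] H)
local notation "ιR" => AlgHom.toLinearMap (includeRight : H →ₐ[k] H ⊗[k] H)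

lemma diagAd_tmul (a b : H) :
    toConv (diagAd (a ⊗ₜ[k] b)) = toConv (ιL ∘ₗ adRight k a) * toConv (ιR ∘ₗ adRight k b) := by
  ext x
  simp [diagAd, adRight, ← (ℛ k x).eq, (ℛ k x).convMul_apply]

lemma includeLeft_comp_mulRight (a : H) :
    ιL ∘ₗ mulRight k a = mulRight k (a ⊗ₜ[k] (1 : H)) ∘ₗ ιL := by
  ext; simp

lemma map_antipode_comp_mulRight_tmul_comp_comul (a b : H) :
    toConv (TensorProduct.map (aS k H) LinearMap.id ∘ₗ mulRight k (a ⊗ₜ[k] b) ∘ₗ comul) =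
      toConv (mulLeft k (aS k H a ⊗ₜ[k] (1 : H)) ∘ₗ ιL ∘ₗ aS k H) *
        toConv (ιR ∘ₗ mulRight k b) := by
  ext x
  simp [← (ℛ k x).eq, (ℛ k x).convMul_apply, aS, HopfAlgebra.antipode_mul_antidistrib]

lemma map_antipode_comp_mulLeft_comp_comul (M : H ⊗[k] H) :
    toConv (TensorProduct.map (aS k H) LinearMap.id ∘ₗ mulLeft k M ∘ₗ comul) =
      toConv (ιL ∘ₗ aS k H) *
        toConv (mulLeft k (TensorProduct.map (aS k H) LinearMap.id M) ∘ₗ ιR) := by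
  ext x
  simp [← (ℛ k x).eq, (ℛ k x).convMul_apply, map_antipode_mul_tmul, mul_assoc]

lemma diagAd_map_antipode (M : H ⊗[k] H) :
    toConv (diagAd (TensorProduct.map (aS k H) LinearMap.id M)) =
      toConv ιL * toConv (TensorProduct.map (aS k H) LinearMap.id ∘ₗ mulRight k M ∘ₗ comul) *
        toConv (ιR ∘ₗ aS k H) := by
  induction M using TensorProduct.induction_on with
  | zero => ext; simp [diagAd]
  | add M N hM hN =>
    have mulRight_add : mulRight k (M + N) = mulRight k M + mulRight k N := by
      ext; simp [mul_add]
    rw [map_add, diagAd_add, toConv_add, hM, hN, mulRight_add, add_comp, comp_add, toConv_add,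
      mul_add, add_mul]
  | tmul a b =>
    rw [map_antipode_comp_mulRight_tmul_comp_comul, ← mul_assoc, ← mulRight_comp_convMul,
      ← includeLeft_comp_mulRight, mul_assoc, TensorProduct.map_tmul, diagAd_tmul,
      LinearMap.id_apply, algHom_comp_adRight, algHom_comp_adRight]

theorem diagAd_map_antipode_of_commute (M : H ⊗[k] H) (hM : ∀ y : H, Commute M (comul y))
    (x : H) :
    diagAd (TensorProduct.map (aS k H) LinearMap.id M) x =
      counit (R := k) x • TensorProduct.map (aS k H) LinearMap.id M := by
  have mulRight_eq_mulLeft : mulRight k M ∘ₗ comul = mulLeft k M ∘ₗ comul :=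
    LinearMap.ext fun y => (hM y).eq.symm
  have hw : toConv (diagAd (TensorProduct.map (aS k H) LinearMap.id M)) =
      toConv (mulLeft k (TensorProduct.map (aS k H) LinearMap.id M) ∘ₗ
        (1 : WithConv (H →ₗ[k] H ⊗[k] H)).ofConv) := by
    rw [diagAd_map_antipode, mulRight_eq_mulLeft, map_antipode_comp_mulLeft_comp_comul,
      ← mul_assoc, aS, algHom_convMul_algHom_comp_antipode, one_mul, mulLeft_comp_convMul,
      algHom_convMul_algHom_comp_antipode]
  rw [Algebra.smul_def, Algebra.commutes]
  simpa using congr($hw x)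

lemma commute_comm_mul_comul (R R' : H ⊗[k] H) (hR'R : R' * R = 1)
    (hqt : ∀ x : H, R * comul x * R' = TensorProduct.comm k H H (comul x)) (x : H) :
    Commute (TensorProduct.comm k H H R * R) (comul x) := by
  have comm_mul : ∀ u v : H ⊗[k] H, TensorProduct.comm k H H (u * v) =
      TensorProduct.comm k H H u * TensorProduct.comm k H H v :=
    map_mul (Algebra.TensorProduct.comm k H H)
  have hR : R * comul x = TensorProduct.comm k H H (comul x) * R := by
    rw [← hqt, mul_assoc _ R', hR'R, mul_one]
  have hR₂₁ : TensorProduct.comm k H H R * TensorProduct.comm k H H (comul x) =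
      comul x * TensorProduct.comm k H H R := by
    have h := congr(TensorProduct.comm k H H $hR)
    rwa [comm_mul, comm_mul, TensorProduct.comm_comm] at h
  rw [Commute, SemiconjBy, mul_assoc, hR, ← mul_assoc, hR₂₁, mul_assoc]

end DiagonalAdjointAction

theorem cPlus_cMinus_invariant
    (α β : ι → H) (R' : H ⊗[k] H)
    (hinv : (∑ i, α i ⊗ₜ[k] β i) * R' = 1 ∧ R' * (∑ i, α i ⊗ₜ[k] β i) = 1)
    (hqt1 : ∀ x : H, (∑ i, α i ⊗ₜ[k] β i) * Coalgebra.comul (R := k) x * R'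
        = TensorProduct.comm k H H (Coalgebra.comul (R := k) x))
    (Q : H ⊗[k] H)
    (hQ : ((∑ i, β i ⊗ₜ[k] α i) * (∑ i, α i ⊗ₜ[k] β i)) * Q = 1 ∧
          Q * ((∑ i, β i ⊗ₜ[k] α i) * (∑ i, α i ⊗ₜ[k] β i)) = 1)
    (x : H) :
    TensorProduct.map (adT k H) (adT k H)
        (TensorProduct.tensorTensorTensorComm k H H H H
          (Coalgebra.comul (R := k) x ⊗ₜ[k]
            TensorProduct.map (aS k H) (LinearMap.id : H →ₗ[k] H)
              ((∑ i, β i ⊗ₜ[k] α i) * (∑ i, α i ⊗ₜ[k] β i))))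
      = Coalgebra.counit (R := k) x •
          TensorProduct.map (aS k H) (LinearMap.id : H →ₗ[k] H)
            ((∑ i, β i ⊗ₜ[k] α i) * (∑ i, α i ⊗ₜ[k] β i)) ∧
    TensorProduct.map (adT k H) (adT k H)
        (TensorProduct.tensorTensorTensorComm k H H H H
          (Coalgebra.comul (R := k) x ⊗ₜ[k]
            TensorProduct.map (aS k H) (LinearMap.id : H →ₗ[k] H) Q))
      = Coalgebra.counit (R := k) x •
          TensorProduct.map (aS k H) (LinearMap.id : H →ₗ[k] H) Q := by
  have hR₂₁ : ∑ i, β i ⊗ₜ[k] α i = TensorProduct.comm k H H (∑ i, α i ⊗ₜ[k] β i) := by simp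
  rw [hR₂₁] at hQ ⊢
  have hc := commute_comm_mul_comul _ R' hinv.2 hqt1
  let U : (H ⊗[k] H)ˣ := ⟨_, Q, hQ.1, hQ.2⟩
  exact ⟨diagAd_map_antipode_of_commute _ hc x,
    diagAd_map_antipode_of_commute Q (fun y => (hc y).units_inv_left (u := U)) x⟩
end

section
/- The transmuted antipode S̲ is an antipode for the transmuted coalgebra structure: μ ∘ (id_H ⊗ S̲) ∘ Δ̲ = μ ∘ (S̲ ⊗ id_H) ∘ Δ̲ = η ∘ ε, where μ and η are the multiplication and unit of H; elementwise, Σ y⟨1⟩ S̲(y⟨2⟩) = Σ S̲(y⟨1⟩) y⟨2⟩ = ε(y)·1 for all y ∈ H, where Δ̲(y) = Σ y⟨1⟩ ⊗ y⟨2⟩. -/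
open scoped TensorProduct
open TensorProduct

variable (k : Type*) [CommRing k] (H : Type*) [Ring H] [HopfAlgebra k H]

variable {ι : Type*} [Fintype ι]

/-!
Two contractions with the R-matrix do all the work. Since `▷` is an action and
`(id ⊗ Δ) R = R₁₃ R₁₂` gives `Σ αⱼ αᵢ ⊗ S(βᵢ) βⱼ = 1`, one gets `Σ S(βᵢ) S̲(αᵢ ▷ z) = S(z)`, so the
first sum collapses to `Σ y₁ S(y₂) = ε(y)`. For the second, `(Δ ⊗ id) R = R₁₃ R₂₃` turns `S̲` into
`S̲(b) = Σ βⱼ ū S(b) S(αⱼ)` with `ū = Σ βᵢ S²(αᵢ)`, and `R⁻¹ = (S ⊗ id) R`. Quasi-cocommutativity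
`Δx R⁻¹ = R⁻¹ Δᵒᵖx` gives `x ū = ū S²(x)`, which moves the `S²(βᵢ)` produced by `S̲(y₁ S(βᵢ))` out
of the way; then `R⁻¹₁₃ R₁₃ = 1` leaves `Σ βⱼ ū S(y₁) y₂ S(αⱼ) = ε(y) S̲(1) = ε(y)`.
-/

namespace Transmutation

open LinearMap Coalgebra HopfAlgebra

variable {k H}

local notation "S" => aS k H
local notation "Δ" => Coalgebra.comul (R := k)
local notation "ε" => Coalgebra.counit (R := k)
local infixr:70 " ▷ " => adL k H

lemma sum_counit_smul_left {C κ : Type*} [AddCommGroup C] [Module k C] [Coalgebra k C] {x : C}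
    (r : Coalgebra.Repr k x κ) : ∑ n ∈ r.index, ε (r.right n) • r.left n = x := by
  simpa only [map_sum, TensorProduct.rid_tmul, one_smul] using
    congrArg (TensorProduct.rid k C) (sum_tmul_counit_eq r)

section Hopf

lemma aS_mul (a b : H) : S (a * b) = S b * S a :=
  antipode_mul_antidistrib a b

lemma aS_one : S (1 : H) = 1 :=
  antipode_one

lemma mul'_rTensor_aS_comul (a : H) : mul' k H (rTensor H S (Δ a)) = algebraMap k H (ε a) :=
  mul_antipode_rTensor_comul_apply a

lemma mul'_lTensor_aS_comul (a : H) : mul' k H (lTensor H S (Δ a)) = algebraMap k H (ε a) :=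
  mul_antipode_lTensor_comul_apply a

lemma sum_mul_aS_eq_smul {x : H} {κ : Type*} (r : Coalgebra.Repr k x κ) :
    ∑ n ∈ r.index, r.left n * S (r.right n) = ε x • 1 :=
  sum_mul_antipode_eq_smul r

lemma sum_aS_mul_eq_smul {x : H} {κ : Type*} (r : Coalgebra.Repr k x κ) :
    ∑ n ∈ r.index, S (r.left n) * r.right n = ε x • 1 :=
  sum_antipode_mul_eq_smul r

lemma adL_apply (x z : H) : x ▷ z = mul' k H (map (mulRight k z) S (Δ x)) := by
  suffices h : ∀ t : H ⊗[k] H, mulH k H (lTensor H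
      (mulH k H ∘ₗ (TensorProduct.comm k H H).toLinearMap ∘ₗ rTensor H S)
        (TensorProduct.assoc k H H H (t ⊗ₜ z))) = mul' k H (map (mulRight k z) S t) from h (Δ x)
  intro t
  induction t using TensorProduct.induction_on with
  | zero => simp
  | tmul a b => simp [mulH, mul_assoc]
  | add s t hs ht => simp only [TensorProduct.add_tmul, map_add, hs, ht]

lemma one_adL (z : H) : (1 : H) ▷ z = z := by
  simp [adL_apply, Bialgebra.comul_one, Algebra.TensorProduct.one_def, aS_one]

lemma adL_one (x : H) : x ▷ (1 : H) = ε x • (1 : H) := by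
  rw [adL_apply, mulRight_one, ← Algebra.algebraMap_eq_smul_one]
  exact mul'_lTensor_aS_comul x

lemma mul_adL (a b z : H) : (a * b) ▷ z = a ▷ b ▷ z := by
  rw [adL_apply, adL_apply, adL_apply, Bialgebra.comul_mul]
  induction Δ a using TensorProduct.induction_on with
  | zero => simp
  | add s t hs ht => simp only [add_mul, map_add, hs, ht]
  | tmul a₁ a₂ =>
    induction Δ b using TensorProduct.induction_on with
    | zero => simp
    | add s t hs ht =>
      simp only [mul_add, map_add, hs, ht, map_tmul, mul'_apply, mulRight_apply] at hs ht ⊢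
      noncomm_ring
    | tmul b₁ b₂ => simp [aS_mul, mul_assoc]

end Hopf

section RMatrix

variable (α β : ι → H)

local notation "𝓡" => ∑ i, α i ⊗ₜ[k] β i

lemma sum_comul_tmul_of_rTensor_comul
    (hqt2 : rTensor H Δ 𝓡 =
      (∑ i, (α i ⊗ₜ[k] (1 : H)) ⊗ₜ[k] β i) * (∑ i, ((1 : H) ⊗ₜ[k] α i) ⊗ₜ[k] β i)) :
    ∑ i, Δ (α i) ⊗ₜ[k] β i = ∑ i, ∑ j, (α i ⊗ₜ[k] α j) ⊗ₜ[k] (β i * β j) := by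
  simpa [map_sum, Finset.sum_mul_sum, Algebra.TensorProduct.tmul_mul_tmul] using hqt2

lemma sum_tmul_comul_of_lTensor_comul
    (hqt3 : lTensor H Δ 𝓡 =
      (∑ i, α i ⊗ₜ[k] ((1 : H) ⊗ₜ[k] β i)) * (∑ i, α i ⊗ₜ[k] (β i ⊗ₜ[k] (1 : H)))) :
    ∑ i, α i ⊗ₜ[k] Δ (β i) = ∑ i, ∑ j, (α i * α j) ⊗ₜ[k] (β j ⊗ₜ[k] β i) := by
  simpa [map_sum, Finset.sum_mul_sum, Algebra.TensorProduct.tmul_mul_tmul] using hqt3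

variable {α β} {R' : H ⊗[k] H}

lemma sum_counit_α_smul_β
    (hΔα : ∑ i, Δ (α i) ⊗ₜ[k] β i = ∑ i, ∑ j, (α i ⊗ₜ[k] α j) ⊗ₜ[k] (β i * β j))
    (hinv : 𝓡 * R' = 1) :
    ∑ i, ε (α i) • β i = 1 := by
  have h := congrArg (rTensor H ((TensorProduct.lid k H).toLinearMap ∘ₗ rTensor H ε)) hΔα
  simp only [map_sum, rTensor_tmul, coe_comp, Function.comp_apply, rTensor_counit_comul,
    LinearEquiv.coe_coe, TensorProduct.lid_tmul, one_smul] at h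
  have hfix : ((1 : H) ⊗ₜ[k] ∑ i, ε (α i) • β i) * 𝓡 = 𝓡 := by
    conv_rhs => rw [h]
    simp only [TensorProduct.tmul_sum, Finset.sum_mul_sum, Algebra.TensorProduct.tmul_mul_tmul,
      one_mul, TensorProduct.smul_tmul, smul_mul_assoc]
  have h1 : (1 : H) ⊗ₜ[k] ∑ i, ε (α i) • β i = 1 := by
    rw [← mul_one (_ ⊗ₜ _), ← hinv, ← mul_assoc, hfix, hinv]
  simpa [Algebra.TensorProduct.one_def] using congrArg (mul' k H) h1

lemma sum_counit_β_smul_α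
    (hΔβ : ∑ i, α i ⊗ₜ[k] Δ (β i) = ∑ i, ∑ j, (α i * α j) ⊗ₜ[k] (β j ⊗ₜ[k] β i))
    (hinv : 𝓡 * R' = 1) :
    ∑ i, ε (β i) • α i = 1 := by
  have h := congrArg (lTensor H ((TensorProduct.rid k H).toLinearMap ∘ₗ lTensor H ε)) hΔβ
  simp only [map_sum, lTensor_tmul, coe_comp, Function.comp_apply, lTensor_counit_comul,
    LinearEquiv.coe_coe, TensorProduct.rid_tmul, one_smul] at h
  have hfix : ((∑ i, ε (β i) • α i) ⊗ₜ[k] (1 : H)) * 𝓡 = 𝓡 := by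
    conv_rhs => rw [h]
    simp only [TensorProduct.sum_tmul, Finset.sum_mul_sum, Algebra.TensorProduct.tmul_mul_tmul,
      one_mul, ← TensorProduct.smul_tmul, smul_mul_assoc]
  have h1 : (∑ i, ε (β i) • α i) ⊗ₜ[k] (1 : H) = 1 := by
    rw [← mul_one (_ ⊗ₜ _), ← hinv, ← mul_assoc, hfix, hinv]
  simpa [Algebra.TensorProduct.one_def] using congrArg (mul' k H) h1

lemma sum_aS_tmul_mul_eq_one
    (hΔα : ∑ i, Δ (α i) ⊗ₜ[k] β i = ∑ i, ∑ j, (α i ⊗ₜ[k] α j) ⊗ₜ[k] (β i * β j))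
    (hinv : 𝓡 * R' = 1) :
    (∑ i, S (α i) ⊗ₜ[k] β i) * 𝓡 = 1 := by
  have h := congrArg (rTensor H (mul' k H ∘ₗ rTensor H S)) hΔα
  simp only [map_sum, rTensor_tmul, coe_comp, Function.comp_apply, mul'_rTensor_aS_comul,
    mul'_apply] at h
  simp only [Finset.sum_mul_sum, Algebra.TensorProduct.tmul_mul_tmul, ← h,
    Algebra.algebraMap_eq_smul_one, TensorProduct.smul_tmul, ← TensorProduct.tmul_sum,
    sum_counit_α_smul_β hΔα hinv, Algebra.TensorProduct.one_def]

lemma eq_sum_aS_tmul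
    (hΔα : ∑ i, Δ (α i) ⊗ₜ[k] β i = ∑ i, ∑ j, (α i ⊗ₜ[k] α j) ⊗ₜ[k] (β i * β j))
    (hinv : 𝓡 * R' = 1) :
    R' = ∑ i, S (α i) ⊗ₜ[k] β i := by
  rw [← one_mul R', ← sum_aS_tmul_mul_eq_one hΔα hinv, mul_assoc, hinv, mul_one]

lemma sum_mul_tmul_aS_mul_eq_one
    (hΔβ : ∑ i, α i ⊗ₜ[k] Δ (β i) = ∑ i, ∑ j, (α i * α j) ⊗ₜ[k] (β j ⊗ₜ[k] β i))
    (hinv : 𝓡 * R' = 1) :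
    ∑ i, ∑ j, (α i * α j) ⊗ₜ[k] (S (β j) * β i) = 1 := by
  have h := congrArg (lTensor H (mul' k H ∘ₗ rTensor H S)) hΔβ
  simp only [map_sum, lTensor_tmul, rTensor_tmul, coe_comp, Function.comp_apply,
    mul'_rTensor_aS_comul, mul'_apply] at h
  simp only [← h, Algebra.algebraMap_eq_smul_one, ← TensorProduct.smul_tmul,
    ← TensorProduct.sum_tmul, sum_counit_β_smul_α hΔβ hinv, Algebra.TensorProduct.one_def]

lemma comul_mul_eq_mul_comm_comul (hinv : R' * 𝓡 = 1)
    (hqt1 : ∀ x : H, 𝓡 * Δ x * R' = TensorProduct.comm k H H (Δ x)) (x : H) :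
    Δ x * R' = R' * TensorProduct.comm k H H (Δ x) := by
  rw [← hqt1, ← mul_assoc, ← mul_assoc, hinv, one_mul]

lemma sum_adL_tmul_eq
    (hΔα : ∑ i, Δ (α i) ⊗ₜ[k] β i = ∑ i, ∑ j, (α i ⊗ₜ[k] α j) ⊗ₜ[k] (β i * β j)) (z : H) :
    ∑ i, (α i ▷ z) ⊗ₜ[k] β i = ∑ i, ∑ j, (α i * z * S (α j)) ⊗ₜ[k] (β i * β j) := by
  have h := congrArg (rTensor H (mul' k H ∘ₗ map (mulRight k z) S)) hΔα
  simpa only [map_sum, rTensor_tmul, coe_comp, Function.comp_apply, map_tmul, mul'_apply,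
    mulRight_apply, ← adL_apply] using h

variable (k α β) in
/-- `Σ βᵢ S²(αᵢ)`, the inverse of the Drinfeld element `Σ S(βᵢ) αᵢ`. -/
noncomputable def ubar : H := ∑ i, β i * S (S (α i))

local notation "ū" => ubar k α β

lemma sum_right_mul_ubar_mul_aS_left
    (hΔα : ∑ i, Δ (α i) ⊗ₜ[k] β i = ∑ i, ∑ j, (α i ⊗ₜ[k] α j) ⊗ₜ[k] (β i * β j))
    (hinv₁ : 𝓡 * R' = 1) (hinv₂ : R' * 𝓡 = 1)
    (hqt1 : ∀ x : H, 𝓡 * Δ x * R' = TensorProduct.comm k H H (Δ x))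
    {x : H} {κ : Type*} (r : Coalgebra.Repr k x κ) :
    ∑ n ∈ r.index, r.right n * ū * S (r.left n) = ε x • ū := by
  -- apply `a ⊗ b ↦ b S(a)` to `Δx · R⁻¹ = R⁻¹ · Δᵒᵖx`, where `R⁻¹ = Σ S(αᵢ) ⊗ βᵢ`
  have h := comul_mul_eq_mul_comm_comul hinv₂ hqt1 x
  rw [eq_sum_aS_tmul hΔα hinv₁, ← r.eq] at h
  have h' := congrArg (mul' k H ∘ₗ (TensorProduct.comm k H H).toLinearMap ∘ₗ rTensor H S) h
  simp only [Finset.sum_mul_sum, map_sum, Algebra.TensorProduct.tmul_mul_tmul,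
    TensorProduct.comm_tmul, coe_comp, Function.comp_apply, LinearEquiv.coe_coe, rTensor_tmul,
    mul'_apply] at h'
  calc ∑ n ∈ r.index, r.right n * ū * S (r.left n)
      = ∑ n ∈ r.index, ∑ i, r.right n * β i * S (r.left n * S (α i)) := by
        simp only [ubar, Finset.mul_sum, Finset.sum_mul, aS_mul, mul_assoc]
    _ = ∑ i, ∑ n ∈ r.index, β i * r.left n * S (S (α i) * r.right n) := h'
    _ = ∑ i, β i * (∑ n ∈ r.index, r.left n * S (r.right n)) * S (S (α i)) := by
        simp only [aS_mul, Finset.mul_sum, Finset.sum_mul, mul_assoc]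
    _ = ε x • ū := by
        simp only [sum_mul_aS_eq_smul, mul_smul_comm, smul_mul_assoc, mul_one, ubar,
          Finset.smul_sum]

lemma mul_ubar
    (hΔα : ∑ i, Δ (α i) ⊗ₜ[k] β i = ∑ i, ∑ j, (α i ⊗ₜ[k] α j) ⊗ₜ[k] (β i * β j))
    (hinv₁ : 𝓡 * R' = 1) (hinv₂ : R' * 𝓡 = 1)
    (hqt1 : ∀ x : H, 𝓡 * Δ x * R' = TensorProduct.comm k H H (Δ x)) (x : H) :
    x * ū = ū * S (S x) := by
  set r := ℛ k x
  set r₁ := fun n ↦ ℛ k (r.left n)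
  set r₂ := fun n ↦ ℛ k (r.right n)
  -- apply `a ⊗ (b ⊗ c) ↦ c ū S(b) S²(a)` to coassociativity
  have h := congrArg (mul' k H ∘ₗ (TensorProduct.comm k H H).toLinearMap ∘ₗ
    map (S ∘ₗ S) (mul' k H ∘ₗ (TensorProduct.comm k H H).toLinearMap ∘ₗ map S (mulRight k ū)))
    (sum_tmul_tmul_eq r r₁ r₂)
  simp only [map_sum, coe_comp, Function.comp_apply, map_tmul, LinearEquiv.coe_coe,
    TensorProduct.comm_tmul, mul'_apply, mulRight_apply] at h
  calc x * ū
      = ∑ n ∈ r.index, (ε (r.left n) • r.right n) * ū := by rw [← Finset.sum_mul, sum_counit_smul]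
    _ = ∑ n ∈ r.index, r.right n * ū * S (ε (r.left n) • 1) := by
        simp only [map_smul, aS_one, smul_mul_assoc, mul_smul_comm, mul_one]
    _ = ∑ n ∈ r.index, ∑ j ∈ (r₁ n).index,
          r.right n * ū * S ((r₁ n).right j) * S (S ((r₁ n).left j)) := by
        simp only [← sum_aS_mul_eq_smul (r₁ _), map_sum, aS_mul, Finset.mul_sum, mul_assoc]
    _ = ∑ n ∈ r.index, ∑ j ∈ (r₂ n).index,
          (r₂ n).right j * ū * S ((r₂ n).left j) * S (S (r.left n)) := h
    _ = ū * S (S x) := by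
        simp only [← Finset.sum_mul, sum_right_mul_ubar_mul_aS_left hΔα hinv₁ hinv₂ hqt1,
          smul_mul_assoc, ← mul_smul_comm, ← Finset.mul_sum, ← map_smul, ← map_sum,
          sum_counit_smul_left]

lemma SB_apply (b : H) : SB k H α β b = ∑ i, β i * S (α i ▷ b) := by
  simp [SB]

lemma SB_eq_sum_mul_ubar
    (hΔα : ∑ i, Δ (α i) ⊗ₜ[k] β i = ∑ i, ∑ j, (α i ⊗ₜ[k] α j) ⊗ₜ[k] (β i * β j)) (b : H) :
    SB k H α β b = ∑ i, β i * ū * S b * S (α i) := by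
  have h := congrArg (mul' k H ∘ₗ (TensorProduct.comm k H H).toLinearMap ∘ₗ rTensor H S)
    (sum_adL_tmul_eq hΔα b)
  simp only [map_sum, coe_comp, Function.comp_apply, rTensor_tmul, LinearEquiv.coe_coe,
    TensorProduct.comm_tmul, mul'_apply] at h
  rw [SB_apply, h]
  simp only [ubar, aS_mul, Finset.mul_sum, Finset.sum_mul, mul_assoc]

lemma SB_one
    (hΔα : ∑ i, Δ (α i) ⊗ₜ[k] β i = ∑ i, ∑ j, (α i ⊗ₜ[k] α j) ⊗ₜ[k] (β i * β j))
    (hinv : 𝓡 * R' = 1) :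
    SB k H α β 1 = 1 := by
  simp only [SB_apply, adL_one, map_smul, aS_one, mul_smul_comm, mul_one,
    sum_counit_α_smul_β hΔα hinv]

lemma sum_aS_mul_SB_adL
    (hΔβ : ∑ i, α i ⊗ₜ[k] Δ (β i) = ∑ i, ∑ j, (α i * α j) ⊗ₜ[k] (β j ⊗ₜ[k] β i))
    (hinv : 𝓡 * R' = 1) (z : H) :
    ∑ i, S (β i) * SB k H α β (α i ▷ z) = S z := by
  have h := congrArg (mul' k H ∘ₗ (TensorProduct.comm k H H).toLinearMap ∘ₗ
    rTensor H (S ∘ₗ adT k H ∘ₗ (TensorProduct.mk k H H).flip z))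
    (sum_mul_tmul_aS_mul_eq_one hΔβ hinv)
  simp only [map_sum, coe_comp, Function.comp_apply, rTensor_tmul, LinearEquiv.coe_coe,
    TensorProduct.comm_tmul, mul'_apply, flip_apply, TensorProduct.mk_apply,
    Algebra.TensorProduct.one_def] at h
  calc ∑ i, S (β i) * SB k H α β (α i ▷ z)
      = ∑ i, ∑ j, S (β i) * β j * S ((α j * α i) ▷ z) := by
        simp only [SB_apply, mul_adL, Finset.mul_sum, mul_assoc]
    _ = S z := by
        rw [Finset.sum_comm]
        exact h.trans (by rw [one_mul]; exact congrArg S (one_adL z))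

lemma sum_SB_mul_adL
    (hΔα : ∑ i, Δ (α i) ⊗ₜ[k] β i = ∑ i, ∑ j, (α i ⊗ₜ[k] α j) ⊗ₜ[k] (β i * β j))
    (hinv₁ : 𝓡 * R' = 1) (hinv₂ : R' * 𝓡 = 1)
    (hqt1 : ∀ x : H, 𝓡 * Δ x * R' = TensorProduct.comm k H H (Δ x)) (x z : H) :
    ∑ i, SB k H α β (x * S (β i)) * (α i ▷ z) = ∑ j, β j * ū * (S x * z) * S (α j) := by
  have hE : ∑ j, ∑ i, (S (α j) * (α i ▷ z)) ⊗ₜ[k] (β j * β i)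
      = ∑ l, (z * S (α l)) ⊗ₜ[k] β l := by
    calc ∑ j, ∑ i, (S (α j) * (α i ▷ z)) ⊗ₜ[k] (β j * β i)
        = (∑ j, S (α j) ⊗ₜ[k] β j) * ∑ i, (α i ▷ z) ⊗ₜ[k] β i := by
          simp only [Finset.sum_mul_sum, Algebra.TensorProduct.tmul_mul_tmul]
      _ = (∑ j, S (α j) ⊗ₜ[k] β j) * (𝓡 * ∑ l, (z * S (α l)) ⊗ₜ[k] β l) := by
          congr 1
          rw [sum_adL_tmul_eq hΔα, Finset.sum_mul_sum]
          simp only [Algebra.TensorProduct.tmul_mul_tmul, mul_assoc]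
      _ = ∑ l, (z * S (α l)) ⊗ₜ[k] β l := by
          rw [← mul_assoc, sum_aS_tmul_mul_eq_one hΔα hinv₁, one_mul]
  have h := congrArg (mul' k H ∘ₗ (TensorProduct.comm k H H).toLinearMap ∘ₗ
    rTensor H (mulLeft k (ū * S x))) hE
  simp only [map_sum, coe_comp, Function.comp_apply, rTensor_tmul, LinearEquiv.coe_coe,
    TensorProduct.comm_tmul, mul'_apply, mulLeft_apply] at h
  calc ∑ i, SB k H α β (x * S (β i)) * (α i ▷ z)
      = ∑ i, ∑ j, β j * (ū * S (S (β i))) * S x * S (α j) * (α i ▷ z) := by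
        simp only [SB_eq_sum_mul_ubar hΔα, aS_mul, Finset.sum_mul, mul_assoc]
    _ = ∑ j, ∑ i, β j * β i * (ū * S x * (S (α j) * (α i ▷ z))) := by
        rw [Finset.sum_comm]
        simp only [← mul_ubar hΔα hinv₁ hinv₂ hqt1, mul_assoc]
    _ = ∑ j, β j * ū * (S x * z) * S (α j) := by
        rw [h]
        simp only [mul_assoc]

lemma DeltaB_apply (y : H) :
    DeltaB k H α β y = ∑ i, map (mulRight k (S (β i))) (adL k H (α i)) (Δ y) := by
  simp [DeltaB]

lemma mulH_lTensor_SB_DeltaB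
    (hΔβ : ∑ i, α i ⊗ₜ[k] Δ (β i) = ∑ i, ∑ j, (α i * α j) ⊗ₜ[k] (β j ⊗ₜ[k] β i))
    (hinv : 𝓡 * R' = 1) (y : H) :
    mulH k H (lTensor H (SB k H α β) (DeltaB k H α β y)) = ε y • 1 := by
  have key : ∀ t : H ⊗[k] H, mulH k H (lTensor H (SB k H α β)
      (∑ i, map (mulRight k (S (β i))) (adL k H (α i)) t)) = mul' k H (lTensor H S t) := by
    intro t
    induction t using TensorProduct.induction_on with
    | zero => simp
    | tmul x z =>
      simp only [map_sum, map_tmul, lTensor_tmul, mulRight_apply, mulH, mul'_apply, mul_assoc,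
        ← Finset.mul_sum, sum_aS_mul_SB_adL hΔβ hinv]
    | add s t hs ht => simp only [map_add, Finset.sum_add_distrib, hs, ht]
  rw [DeltaB_apply, key, mul'_lTensor_aS_comul, Algebra.algebraMap_eq_smul_one]

lemma mulH_rTensor_SB_DeltaB
    (hΔα : ∑ i, Δ (α i) ⊗ₜ[k] β i = ∑ i, ∑ j, (α i ⊗ₜ[k] α j) ⊗ₜ[k] (β i * β j))
    (hinv₁ : 𝓡 * R' = 1) (hinv₂ : R' * 𝓡 = 1)
    (hqt1 : ∀ x : H, 𝓡 * Δ x * R' = TensorProduct.comm k H H (Δ x)) (y : H) :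
    mulH k H (rTensor H (SB k H α β) (DeltaB k H α β y)) = ε y • 1 := by
  have key : ∀ t : H ⊗[k] H, mulH k H (rTensor H (SB k H α β)
      (∑ i, map (mulRight k (S (β i))) (adL k H (α i)) t))
        = ∑ j, β j * ū * mul' k H (rTensor H S t) * S (α j) := by
    intro t
    induction t using TensorProduct.induction_on with
    | zero => simp
    | tmul x z =>
      simp only [map_sum, map_tmul, rTensor_tmul, mulRight_apply, mulH, mul'_apply,
        sum_SB_mul_adL hΔα hinv₁ hinv₂ hqt1]
    | add s t hs ht =>
      simp only [map_add, Finset.sum_add_distrib, hs, ht, mul_add, add_mul]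
  rw [DeltaB_apply, key, mul'_rTensor_aS_comul, Algebra.algebraMap_eq_smul_one]
  simp only [mul_smul_comm, smul_mul_assoc, mul_one, ← Finset.smul_sum]
  rw [← SB_one hΔα hinv₁, SB_eq_sum_mul_ubar hΔα]
  simp only [aS_one, mul_one]

end RMatrix

end Transmutation

/-- The transmuted antipode is an antipode for the transmuted comultiplication:
`Σ y⟨1⟩ S̲(y⟨2⟩) = Σ S̲(y⟨1⟩) y⟨2⟩ = ε(y)·1`. -/
theorem SB_antipode_DeltaB
    (α β : ι → H) (R' : H ⊗[k] H)
    (hinv : (∑ i, α i ⊗ₜ[k] β i) * R' = 1 ∧ R' * (∑ i, α i ⊗ₜ[k] β i) = 1)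
    (hqt1 : ∀ x : H, (∑ i, α i ⊗ₜ[k] β i) * Coalgebra.comul (R := k) x * R'
        = TensorProduct.comm k H H (Coalgebra.comul (R := k) x))
    (hqt2 : LinearMap.rTensor H (Coalgebra.comul (R := k)) (∑ i, α i ⊗ₜ[k] β i)
        = (∑ i, (α i ⊗ₜ[k] (1 : H)) ⊗ₜ[k] β i) * (∑ i, ((1 : H) ⊗ₜ[k] α i) ⊗ₜ[k] β i))
    (hqt3 : LinearMap.lTensor H (Coalgebra.comul (R := k)) (∑ i, α i ⊗ₜ[k] β i)
        = (∑ i, α i ⊗ₜ[k] ((1 : H) ⊗ₜ[k] β i)) * (∑ i, α i ⊗ₜ[k] (β i ⊗ₜ[k] (1 : H))))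
    (y : H) :
    mulH k H (LinearMap.lTensor H (SB k H α β) (DeltaB k H α β y))
        = Coalgebra.counit (R := k) y • (1 : H) ∧
      mulH k H (LinearMap.rTensor H (SB k H α β) (DeltaB k H α β y))
        = Coalgebra.counit (R := k) y • (1 : H) := by
  have hΔα := Transmutation.sum_comul_tmul_of_rTensor_comul α β hqt2
  have hΔβ := Transmutation.sum_tmul_comul_of_lTensor_comul α β hqt3
  exact ⟨Transmutation.mulH_lTensor_SB_DeltaB hΔβ hinv.1 y,
    Transmutation.mulH_rTensor_SB_DeltaB hΔα hinv.1 hinv.2 hqt1 y⟩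
end

section
/- Let M be a braided monoidal category (not necessarily strict), let b, c, d be objects of M, and let f, f′ : 𝟙 → b be morphisms. For morphisms g, g′ : c → d, the following are equivalent: (i) there exist objects z, z′ and morphisms h₁ : c → z ⊗ z′ and h₂ : z ⊗ (b ⊗ z′) → d such that g = h₂ ∘ (id_z ⊗ ((f ⊗ id_{z′}) ∘ λ_{z′}⁻¹)) ∘ h₁ and g′ = h₂ ∘ (id_z ⊗ ((f′ ⊗ id_{z′}) ∘ λ_{z′}⁻¹)) ∘ h₁; (ii) there exists a morphism h : c ⊗ b → d such that g = h ∘ (id_c ⊗ f) ∘ ρ_c⁻¹ and g′ = h ∘ (id_c ⊗ f′) ∘ ρ_c⁻¹. Here λ and ρ denote the left and right unitors of M. -/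
open CategoryTheory MonoidalCategory

universe v u

/-- In a braided monoidal category, two morphisms `g, g' : c ⟶ d` are related by the monoidal
relation generated by a pair `(f, f')` of morphisms `𝟙 ⟶ b` iff there is a single morphism
`h : c ⊗ b ⟶ d` with `g = h ∘ (id_c ⊗ f) ∘ ρ_c⁻¹` and `g' = h ∘ (id_c ⊗ f') ∘ ρ_c⁻¹`. -/
theorem monoidalRelation_single_pair_iff
    {M : Type u} [Category.{v} M] [MonoidalCategory M] [BraidedCategory M]
    {b c d : M} (f f' : 𝟙_ M ⟶ b) (g g' : c ⟶ d) :
    (∃ (z z' : M) (h₁ : c ⟶ z ⊗ z') (h₂ : z ⊗ (b ⊗ z') ⟶ d),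
        g = h₁ ≫ (z ◁ ((λ_ z').inv ≫ (f ▷ z'))) ≫ h₂ ∧
        g' = h₁ ≫ (z ◁ ((λ_ z').inv ≫ (f' ▷ z'))) ≫ h₂) ↔
      (∃ h : c ⊗ b ⟶ d,
        g = (ρ_ c).inv ≫ (c ◁ f) ≫ h ∧
        g' = (ρ_ c).inv ≫ (c ◁ f') ≫ h) := by
  constructor
  · rintro ⟨z, z', h₁, h₂, hg, hg'⟩
    have key : ∀ (φ : 𝟙_ M ⟶ b),
        (ρ_ c).inv ≫ (c ◁ φ) ≫ ((h₁ ▷ b) ≫ (α_ z z' b).hom ≫ (z ◁ (β_ z' b).hom) ≫ h₂)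
          = h₁ ≫ (z ◁ ((λ_ z').inv ≫ (φ ▷ z'))) ≫ h₂ := by
      intro φ
      rw [whisker_exchange_assoc, ← rightUnitor_inv_naturality_assoc,
        associator_naturality_right_assoc]
      congr 1
      rw [← MonoidalCategory.whiskerLeft_comp_assoc,
        BraidedCategory.braiding_naturality_right, braiding_tensorUnit_right]
      simp only [MonoidalCategory.whiskerLeft_comp, Category.assoc]
      have hcoh : (ρ_ (z ⊗ z')).inv ≫ (α_ z z' (𝟙_ M)).hom ≫ (z ◁ (ρ_ z').hom)
          = 𝟙 (z ⊗ z') := by monoidal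
      slice_lhs 1 3 => rw [hcoh]
      simp
    exact ⟨(h₁ ▷ b) ≫ (α_ z z' b).hom ≫ (z ◁ (β_ z' b).hom) ≫ h₂,
      by rw [hg, key], by rw [hg', key]⟩
  · rintro ⟨h, hg, hg'⟩
    have key : ∀ (φ : 𝟙_ M ⟶ b),
        (ρ_ c).inv ≫ (c ◁ ((λ_ (𝟙_ M)).inv ≫ (φ ▷ 𝟙_ M))) ≫ ((c ◁ (ρ_ b).hom) ≫ h)
          = (ρ_ c).inv ≫ (c ◁ φ) ≫ h := by
      intro φ
      rw [← MonoidalCategory.whiskerLeft_comp_assoc]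
      congr 2
      congr 1
      simp [← unitors_equal]
    exact ⟨c, 𝟙_ M, (ρ_ c).inv, (c ◁ (ρ_ b).hom) ≫ h,
      by rw [hg, ← key], by rw [hg', ← key]⟩
end

section
/- Let C be a braided monoidal category and A a Hopf monoid in C. Then the morphism h_A = (μ ⊗ A) ∘ (A ⊗ Δ) : A ⊗ A → A ⊗ A (composed with the appropriate associativity isomorphisms) is an isomorphism, with inverse h_A⁻¹ = (μ ⊗ A) ∘ (A ⊗ S ⊗ A) ∘ (A ⊗ Δ); that is, h_A ∘ h_A⁻¹ = h_A⁻¹ ∘ h_A = id_{A ⊗ A}. -/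
open CategoryTheory MonoidalCategory

universe v u

/-!
For an endomorphism `f` of `A` put `h_f = (μ ⊗ A) ∘ (A ⊗ f ⊗ A) ∘ (A ⊗ Δ)`, so that `h_A = h_id`
and the claimed inverse is `h_S`. Associativity and coassociativity give `h_g ∘ h_f = h_{f ⋆ g}`
for the convolution product `f ⋆ g = μ ∘ (f ⊗ g) ∘ Δ`, and the unit and counit laws give
`h_{η ∘ ε} = id`. The antipode axioms say exactly that `id ⋆ S = S ⋆ id = η ∘ ε`.
-/

namespace Fusion

variable {C : Type u} [Category.{v} C] [MonoidalCategory C] {A : C}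
  (mul : A ⊗ A ⟶ A) (comul : A ⟶ A ⊗ A)

def conv (f g : A ⟶ A) : A ⟶ A := comul ≫ (f ⊗ₘ g) ≫ mul

def fusionWith (f : A ⟶ A) : A ⊗ A ⟶ A ⊗ A :=
  (A ◁ comul) ≫ (A ◁ (f ▷ A)) ≫ (α_ A A A).inv ≫ (mul ▷ A)

theorem fusionWith_id :
    fusionWith mul comul (𝟙 A) = (A ◁ comul) ≫ (α_ A A A).inv ≫ (mul ▷ A) := by
  simp [fusionWith]

variable {mul comul}

theorem comul_whiskerRight_fusionWith
    (h_coassoc : comul ≫ (comul ▷ A) ≫ (α_ A A A).hom = comul ≫ (A ◁ comul)) (f g : A ⟶ A) :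
    comul ≫ (f ▷ A) ≫ fusionWith mul comul g = comul ≫ (conv mul comul f g ▷ A) := by
  rw [fusionWith, ← whisker_exchange_assoc, ← Category.assoc comul, ← h_coassoc]
  simp [conv, MonoidalCategory.tensorHom_def]

theorem fusionWith_comp_fusionWith
    (h_mul_assoc : (mul ▷ A) ≫ mul = (α_ A A A).hom ≫ (A ◁ mul) ≫ mul)
    (h_coassoc : comul ≫ (comul ▷ A) ≫ (α_ A A A).hom = comul ≫ (A ◁ comul)) (f g : A ⟶ A) :
    fusionWith mul comul f ≫ fusionWith mul comul g =
      fusionWith mul comul (conv mul comul f g) := by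
  -- Slide the first `μ ▷ A` to the end, where associativity merges it with the second one;
  -- what remains in front is `A ◁ (Δ ≫ f ▷ A ≫ h_g)`.
  simp only [fusionWith, Category.assoc]
  slice_lhs 4 5 => rw [← whisker_exchange]
  slice_lhs 5 6 => rw [← whisker_exchange]
  slice_lhs 6 7 => rw [associator_inv_naturality_left]
  slice_lhs 7 8 => rw [← comp_whiskerRight, h_mul_assoc, comp_whiskerRight, comp_whiskerRight]
  slice_lhs 3 4 => rw [← associator_inv_naturality_right]
  slice_lhs 4 5 => rw [← associator_inv_naturality_right]
  slice_lhs 5 7 => rw [pentagon_inv_inv_hom_inv_inv]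
  slice_lhs 6 7 => rw [← associator_inv_naturality_middle]
  conv_rhs =>
    rw [← MonoidalCategory.whiskerLeft_comp_assoc, ← comul_whiskerRight_fusionWith h_coassoc]
  simp [fusionWith]

theorem fusionWith_counit_comp_unit {unit : 𝟙_ C ⟶ A} {counit : A ⟶ 𝟙_ C}
    (h_mul_one : (A ◁ unit) ≫ mul = (ρ_ A).hom)
    (h_counit_left : comul ≫ (counit ▷ A) ≫ (λ_ A).hom = 𝟙 A) :
    fusionWith mul comul (counit ≫ unit) = 𝟙 (A ⊗ A) := by
  have h_counit : comul ≫ (counit ▷ A) = (λ_ A).inv := by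
    rw [← cancel_mono (λ_ A).hom, Category.assoc, h_counit_left, Iso.inv_hom_id]
  simp only [fusionWith, comp_whiskerRight, MonoidalCategory.whiskerLeft_comp, Category.assoc]
  rw [← MonoidalCategory.whiskerLeft_comp_assoc, h_counit]
  slice_lhs 2 3 => rw [associator_inv_naturality_middle]
  slice_lhs 3 4 => rw [← comp_whiskerRight, h_mul_one]
  simp

end Fusion

theorem fence_iso_general
    {C : Type u} [Category.{v} C] [MonoidalCategory C]
    (A : C) (mul : A ⊗ A ⟶ A) (unit : 𝟙_ C ⟶ A)
    (comul : A ⟶ A ⊗ A) (counit : A ⟶ 𝟙_ C) (anti : A ⟶ A)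
    (h_mul_assoc : (mul ▷ A) ≫ mul = (α_ A A A).hom ≫ (A ◁ mul) ≫ mul)
    (h_mul_one : (A ◁ unit) ≫ mul = (ρ_ A).hom)
    (h_coassoc : comul ≫ (comul ▷ A) ≫ (α_ A A A).hom = comul ≫ (A ◁ comul))
    (h_counit_left : comul ≫ (counit ▷ A) ≫ (λ_ A).hom = 𝟙 A)
    (h_antipode_left : comul ≫ (anti ▷ A) ≫ mul = counit ≫ unit)
    (h_antipode_right : comul ≫ (A ◁ anti) ≫ mul = counit ≫ unit)
    :
    ((A ◁ comul) ≫ (α_ A A A).inv ≫ (mul ▷ A)) ≫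
        ((A ◁ comul) ≫ (A ◁ (anti ▷ A)) ≫ (α_ A A A).inv ≫ (mul ▷ A)) = 𝟙 (A ⊗ A) ∧
      ((A ◁ comul) ≫ (A ◁ (anti ▷ A)) ≫ (α_ A A A).inv ≫ (mul ▷ A)) ≫
        ((A ◁ comul) ≫ (α_ A A A).inv ≫ (mul ▷ A)) = 𝟙 (A ⊗ A) := by
  have h_id_conv_anti : Fusion.conv mul comul (𝟙 A) anti = counit ≫ unit := by
    simpa [Fusion.conv] using h_antipode_right
  have h_anti_conv_id : Fusion.conv mul comul anti (𝟙 A) = counit ≫ unit := by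
    simpa [Fusion.conv] using h_antipode_left
  rw [← Fusion.fusionWith_id, ← Fusion.fusionWith,
    Fusion.fusionWith_comp_fusionWith h_mul_assoc h_coassoc,
    Fusion.fusionWith_comp_fusionWith h_mul_assoc h_coassoc, h_id_conv_anti, h_anti_conv_id,
    Fusion.fusionWith_counit_comp_unit h_mul_one h_counit_left]
  exact ⟨rfl, rfl⟩

/-- For a Hopf monoid `A` in a braided monoidal category, the morphism
`h_A = (μ ⊗ A) ∘ (A ⊗ Δ)` is an isomorphism with inverse
`(μ ⊗ A) ∘ (A ⊗ S ⊗ A) ∘ (A ⊗ Δ)`. -/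
theorem fence_iso
    {C : Type u} [Category.{v} C] [MonoidalCategory C] [BraidedCategory C]
    (A : C) (mul : A ⊗ A ⟶ A) (unit : 𝟙_ C ⟶ A)
    (comul : A ⟶ A ⊗ A) (counit : A ⟶ 𝟙_ C) (anti : A ⟶ A)
    (h_mul_assoc : (mul ▷ A) ≫ mul = (α_ A A A).hom ≫ (A ◁ mul) ≫ mul)
    (h_one_mul : (unit ▷ A) ≫ mul = (λ_ A).hom)
    (h_mul_one : (A ◁ unit) ≫ mul = (ρ_ A).hom)
    (h_coassoc : comul ≫ (comul ▷ A) ≫ (α_ A A A).hom = comul ≫ (A ◁ comul))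
    (h_counit_left : comul ≫ (counit ▷ A) ≫ (λ_ A).hom = 𝟙 A)
    (h_counit_right : comul ≫ (A ◁ counit) ≫ (ρ_ A).hom = 𝟙 A)
    (h_mul_comul : mul ≫ comul
      = (comul ⊗ₘ comul) ≫ (α_ A A (A ⊗ A)).hom ≫ (A ◁ (α_ A A A).inv) ≫
          (A ◁ ((β_ A A).hom ▷ A)) ≫ (A ◁ (α_ A A A).hom) ≫ (α_ A A (A ⊗ A)).inv ≫
          (mul ⊗ₘ mul))
    (h_counit_mul : mul ≫ counit = (counit ⊗ₘ counit) ≫ (λ_ (𝟙_ C)).hom)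
    (h_comul_unit : unit ≫ comul = (λ_ (𝟙_ C)).inv ≫ (unit ⊗ₘ unit))
    (h_counit_unit : unit ≫ counit = 𝟙 (𝟙_ C))
    (h_antipode_left : comul ≫ (anti ▷ A) ≫ mul = counit ≫ unit)
    (h_antipode_right : comul ≫ (A ◁ anti) ≫ mul = counit ≫ unit)
    :
    ((A ◁ comul) ≫ (α_ A A A).inv ≫ (mul ▷ A)) ≫
        ((A ◁ comul) ≫ (A ◁ (anti ▷ A)) ≫ (α_ A A A).inv ≫ (mul ▷ A)) = 𝟙 (A ⊗ A) ∧
      ((A ◁ comul) ≫ (A ◁ (anti ▷ A)) ≫ (α_ A A A).inv ≫ (mul ▷ A)) ≫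
        ((A ◁ comul) ≫ (α_ A A A).inv ≫ (mul ▷ A)) = 𝟙 (A ⊗ A) :=
  fence_iso_general A mul unit comul counit anti h_mul_assoc h_mul_one h_coassoc h_counit_left
    h_antipode_left h_antipode_right
end
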